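/- arXiv:2002.08520 — 3 statements merged into one kernel-verified Lean document; each statement's English description precedes it below -/
import Mathlib

section
/- Let P and Q be two polygons (2-dimensional polytopes) in a plane H with f = P ∩ Q a common edge, and suppose Q is a triangle, Q = conv(f ∪ {v}) with v on the opposite side of aff(f) from P. Then closure(conv(P ∪ Q) \ P) is a pyramid over an edge-containing polygon with apex v; in particular, if every vertex of P visible from v is an endpoint of f, then P ⊂_Δ conv(P ∪ {v}) is a pyramidal extension with Δ = conv(f ∪ {v}). -/
open Set

noncomputable section

/-- A polytope: the convex hull of a finite set of points. -/
def IsPolytope {E : Type*} [AddCommGroup E] [Module ℝ E] (P : Set E) : Prop :=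
  ∃ s : Finset E, P = convexHull ℝ (s : Set E)

/-- The dimension of a set: the dimension of its affine hull. -/
def polyDim {E : Type*} [AddCommGroup E] [Module ℝ E] (P : Set E) : ℕ :=
  Module.finrank ℝ (affineSpan ℝ P).direction

/-- A facet: an exposed face of dimension one less. -/
def IsFacet {E : Type*} [NormedAddCommGroup E] [NormedSpace ℝ E] (F P : Set E) : Prop :=
  IsExposed ℝ P F ∧ polyDim F + 1 = polyDim P

/-- `Δ` is a pyramid with base the polytope `B` and apex `v`. -/
def IsPyramidOver {E : Type*} [AddCommGroup E] [Module ℝ E]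
    (Δ B : Set E) (v : E) : Prop :=
  IsPolytope B ∧ v ∉ affineSpan ℝ B ∧ Δ = convexHull ℝ (B ∪ {v})

/-- Pyramidal extension: `closure (Q \ P)` is a pyramid whose intersection with `P`
is a facet of it. -/
def PyramidalExt {E : Type*} [NormedAddCommGroup E] [NormedSpace ℝ E]
    (P Q : Set E) : Prop :=
  IsPolytope P ∧ IsPolytope Q ∧ P ⊆ Q ∧
    (∃ B v, IsPyramidOver (closure (Q \ P)) B v) ∧
    IsFacet (closure (Q \ P) ∩ P) (closure (Q \ P))

end

/-- A facet `F` of `P` is visible from the external point `v`: `v` lies strictly on the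
other side of the supporting hyperplane of `F`. -/
def VisibleFacet {E : Type*} [NormedAddCommGroup E] [NormedSpace ℝ E]
    (P F : Set E) (v : E) : Prop :=
  IsFacet F P ∧ ∃ φ : E →ᵃ[ℝ] ℝ, (∀ x ∈ P, φ x ≤ 0) ∧ (∀ x ∈ F, φ x = 0) ∧ 0 < φ v

/-!
Every point of `conv (P ∪ {v}) \ P` lies on a segment from `v` to a point of `P` visible from `v`,
namely the first point of `P` met on the way. Visibility is preserved when passing from a point
of an open segment in `P` to its endpoints, so the visible set is an extreme subset of `P`, and
every visible point is a convex combination of visible vertices, which lie in `f` by hypothesis.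
Hence `conv (P ∪ {v}) = P ∪ conv (f ∪ {v})`. The affine function `φ` separating `v` from `P` is
positive on the triangle away from `f`, so the closure of the difference is the whole triangle,
and `f` is its face `{φ = 0}`.
-/

section

variable {E : Type*} [AddCommGroup E] [Module ℝ E]

theorem IsExtreme.subset_convexHull_inter {s F : Set E} (hF : IsExtreme ℝ (convexHull ℝ s) F) :
    F ⊆ convexHull ℝ (F ∩ s) := by
  classical
  intro x hxF
  obtain ⟨t, hts, hxt⟩ := mem_iUnion₂.1 <|
    convexHull_eq_union_convexHull_finite_subsets (R := ℝ) s ▸ hF.subset hxF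
  induction t using Finset.induction_on generalizing x with
  | empty => simp at hxt
  | insert a t _ ih =>
    have hts' : (t : Set E) ⊆ s := fun y hy => hts (Finset.mem_insert_of_mem hy)
    have has : a ∈ s := hts (Finset.mem_insert_self a t)
    rcases t.eq_empty_or_nonempty with rfl | ht
    · simp only [insert_empty_eq, Finset.coe_singleton, convexHull_singleton,
        mem_singleton_iff] at hxt
      subst hxt
      exact subset_convexHull ℝ _ ⟨hxF, has⟩
    rw [Finset.coe_insert, convexHull_insert (by exact_mod_cast ht), mem_convexJoin] at hxt
    obtain ⟨a, rfl, y, hyt, hxay⟩ := hxt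
    by_cases hxy : x = y
    · exact ih (hxy ▸ hxF) hts' (hxy ▸ hyt)
    by_cases hxa : x = a
    · exact subset_convexHull ℝ _ ⟨hxF, hxa ▸ has⟩
    have hys : y ∈ convexHull ℝ s := convexHull_mono hts' hyt
    have hxay' := mem_openSegment_of_ne_left_right (Ne.symm hxa) (Ne.symm hxy) hxay
    have haF := hF.left_mem_of_mem_openSegment (subset_convexHull ℝ s has) hys hxF hxay'
    have hyF := hF.right_mem_of_mem_openSegment (subset_convexHull ℝ s has) hys hxF hxay'
    exact (convex_convexHull ℝ _).segment_subset (subset_convexHull ℝ (F ∩ s) ⟨haF, has⟩)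
      (ih hyF hts' hyt) hxay

def visiblePart (P : Set E) (v : E) : Set E :=
  {p ∈ P | openSegment ℝ v p ∩ P = ∅}

/-- If `z ∈ (v, a)` and `p ∈ (a, b)`, the segments `[z, b]` and `(v, p)` cross inside the
triangle `v a b`. -/
theorem Convex.openSegment_inter_nonempty_of_mem_openSegment {P : Set E} (hP : Convex ℝ P)
    {v a b p z : E} (hz : z ∈ openSegment ℝ v a ∩ P) (hb : b ∈ P)
    (hp : p ∈ openSegment ℝ a b) : (openSegment ℝ v p ∩ P).Nonempty := by
  obtain ⟨⟨τ', τ, hτ', hτ, hτsum, rfl⟩, hzP⟩ := hz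
  obtain ⟨σ', σ, hσ', hσ, hσsum, rfl⟩ := hp
  obtain rfl : τ' = 1 - τ := by linarith
  obtain rfl : σ' = 1 - σ := by linarith
  set d := 1 - σ * (1 - τ)
  have hd_pos : 0 < d := by nlinarith
  have hdd : d * d⁻¹ = 1 := mul_inv_cancel₀ hd_pos.ne'
  refine ⟨(1 - τ / d) • v + (τ / d) • ((1 - σ) • a + σ • b),
    ⟨1 - τ / d, τ / d, ?_, by positivity, by ring, rfl⟩, ?_⟩
  · rw [sub_pos, div_lt_one hd_pos]; nlinarith
  have hcross : (1 - τ / d) • v + (τ / d) • ((1 - σ) • a + σ • b)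
      = (1 - σ * τ / d) • ((1 - τ) • v + τ • a) + (σ * τ / d) • b := by
    match_scalars
    · linear_combination (-τ) * hdd
    · linear_combination τ * hdd
    · ring
  rw [hcross]
  exact hP hzP hb (by rw [sub_nonneg, div_le_one hd_pos]; nlinarith) (by positivity) (by ring)

theorem Convex.isExtreme_visiblePart {P : Set E} (hP : Convex ℝ P) (v : E) :
    IsExtreme ℝ P (visiblePart P v) where
  subset _ hp := hp.1
  left_mem_of_mem_openSegment a ha b hb p hp hpab := by
    refine ⟨ha, eq_empty_of_forall_notMem fun z hz => ?_⟩
    exact (hP.openSegment_inter_nonempty_of_mem_openSegment hz hb hpab).ne_empty hp.2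

theorem nonneg_of_mem_convexHull_insert {s : Set E} {v : E} (φ : E →ᵃ[ℝ] ℝ)
    (hφs : ∀ x ∈ s, φ x = 0) (hφv : 0 < φ v) {x : E} (hx : x ∈ convexHull ℝ (insert v s)) :
    0 ≤ φ x := by
  have hsub : insert v s ⊆ φ ⁻¹' Ici 0 := insert_subset_iff.2 ⟨hφv.le, fun y hy => (hφs y hy).ge⟩
  exact convexHull_min hsub ((convex_Ici 0).affine_preimage φ) hx

theorem setOf_mem_convexHull_insert_eq_zero {s : Set E} (hs : Convex ℝ s) {v : E}
    (φ : E →ᵃ[ℝ] ℝ) (hφs : ∀ x ∈ s, φ x = 0) (hφv : 0 < φ v) :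
    {x ∈ convexHull ℝ (insert v s) | φ x = 0} = s := by
  refine Subset.antisymm ?_ fun x hx => ⟨subset_convexHull ℝ _ (mem_insert_of_mem v hx), hφs x hx⟩
  rintro x ⟨hx, hx0⟩
  rcases s.eq_empty_or_nonempty with rfl | hne
  · rw [insert_empty_eq, convexHull_singleton, mem_singleton_iff] at hx
    exact absurd (hx ▸ hx0) hφv.ne'
  rw [convexHull_insert hne, hs.convexHull_eq, mem_convexJoin] at hx
  obtain ⟨_, rfl, y, hy, a, b, ha, hb, hab, rfl⟩ := hx
  rw [Convex.combo_affine_apply hab, smul_eq_mul, smul_eq_mul, hφs y hy, mul_zero,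
    add_zero] at hx0
  obtain rfl : a = 0 := by nlinarith
  obtain rfl : b = 1 := by linarith
  simpa using hy

theorem notMem_affineSpan_of_affineMap {s : Set E} {v : E} (φ : E →ᵃ[ℝ] ℝ)
    (hφs : ∀ x ∈ s, φ x = 0) (hφv : φ v ≠ 0) : v ∉ affineSpan ℝ s := by
  have hspan : affineSpan ℝ s ≤ (affineSpan ℝ {(0 : ℝ)}).comap φ :=
    affineSpan_le.2 fun x hx => by simp [hφs x hx]
  intro hv
  have := AffineSubspace.mem_comap.1 (hspan hv)
  exact hφv ((AffineSubspace.mem_affineSpan_singleton ℝ ℝ).1 this)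

theorem polyDim_convexHull_insert [FiniteDimensional ℝ E] {s : Set E} {v : E}
    (hs : s.Nonempty) (hv : v ∉ affineSpan ℝ s) :
    polyDim (convexHull ℝ (insert v s)) = polyDim s + 1 := by
  obtain ⟨p, hp⟩ := hs
  have hp' : p ∈ affineSpan ℝ s := mem_affineSpan ℝ hp
  rw [polyDim, polyDim, affineSpan_convexHull, ← affineSpan_insert_affineSpan,
    AffineSubspace.direction_affineSpan_insert hp', sup_comm,
    Submodule.finrank_sup_span_singleton]
  rwa [AffineSubspace.vsub_right_mem_direction_iff_mem hp']

theorem polyDim_empty : polyDim (∅ : Set E) = 0 := by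
  rw [polyDim, AffineSubspace.span_empty, AffineSubspace.direction_bot, finrank_bot]

end

section

variable {E : Type*} [AddCommGroup E] [Module ℝ E] [TopologicalSpace E]
  [IsTopologicalAddGroup E] [ContinuousSMul ℝ E]

/-- The first point of `P` on the way from `v` to `y` is visible from `v`. -/
theorem Convex.exists_mem_visiblePart_of_mem_segment {P : Set E} (hP : Convex ℝ P)
    (hPclosed : IsClosed P) {v x y : E} (hy : y ∈ P) (hx : x ∈ segment ℝ v y) (hxP : x ∉ P) :
    ∃ p ∈ visiblePart P v, x ∈ segment ℝ v p := by
  set g : ℝ →ᵃ[ℝ] E := AffineMap.lineMap v y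
  set S := Icc (0 : ℝ) 1 ∩ g ⁻¹' P
  have hS1 : (1 : ℝ) ∈ S := ⟨right_mem_Icc.2 zero_le_one, by simpa [g] using hy⟩
  have hSbdd : BddBelow S := ⟨0, fun r hr => hr.1.1⟩
  have hrS : sInf S ∈ S :=
    (isClosed_Icc.inter (hPclosed.preimage AffineMap.lineMap_continuous)).csInf_mem ⟨1, hS1⟩ hSbdd
  set r := sInf S
  have hv : g 0 = v := AffineMap.lineMap_apply_zero v y
  rw [segment_eq_image_lineMap] at hx
  obtain ⟨t, ht, rfl⟩ := hx
  have htr : t < r := by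
    by_contra! hrt
    refine hxP (hP.segment_subset hrS.2 hS1.2 ?_)
    rw [← image_segment, segment_eq_Icc hrS.1.2]
    exact mem_image_of_mem g (Set.mem_Icc.2 ⟨hrt, ht.2⟩)
  refine ⟨g r, ⟨hrS.2, eq_empty_of_forall_notMem ?_⟩, ?_⟩
  · rintro _ ⟨hq, hqP⟩
    rw [← hv, ← image_openSegment, openSegment_eq_Ioo (ht.1.trans_lt htr)] at hq
    obtain ⟨q, hq, rfl⟩ := hq
    have hqS : q ∈ S := mem_inter ⟨hq.1.le, hq.2.le.trans hrS.1.2⟩ hqP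
    exact hq.2.not_ge (csInf_le hSbdd hqS)
  · have hgt := mem_image_of_mem g (Set.mem_Icc.2 ⟨ht.1, htr.le⟩)
    rwa [← segment_eq_Icc (ht.1.trans htr.le), image_segment, hv] at hgt

theorem Convex.convexHull_insert_subset_union_visiblePart {P : Set E} (hP : Convex ℝ P)
    (hPclosed : IsClosed P) (v : E) :
    convexHull ℝ (insert v P) ⊆ P ∪ convexHull ℝ (insert v (visiblePart P v)) := by
  rcases P.eq_empty_or_nonempty with rfl | hne
  · exact (convexHull_mono (insert_subset_insert (empty_subset _))).trans subset_union_right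
  intro x hx
  rw [convexHull_insert hne, hP.convexHull_eq, mem_convexJoin] at hx
  obtain ⟨_, rfl, y, hy, hxy⟩ := hx
  by_cases hxP : x ∈ P
  · exact Or.inl hxP
  obtain ⟨p, hp, hxp⟩ := hP.exists_mem_visiblePart_of_mem_segment hPclosed hy hxy hxP
  exact Or.inr (segment_subset_convexHull (mem_insert _ _) (mem_insert_of_mem _ hp) hxp)

theorem Convex.subset_closure_setOf_pos {K : Set E} (hK : Convex ℝ K) {v : E} (hv : v ∈ K)
    (φ : E →ᵃ[ℝ] ℝ) (hφK : ∀ x ∈ K, 0 ≤ φ x) (hφv : 0 < φ v) :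
    K ⊆ closure {x ∈ K | 0 < φ x} := by
  intro x hx
  refine closure_mono ?_ (segment_subset_closure_openSegment (left_mem_segment ℝ x v))
  rintro _ ⟨a, b, ha, hb, hab, rfl⟩
  refine ⟨hK hx hv ha.le hb.le hab, ?_⟩
  rw [Convex.combo_affine_apply hab, smul_eq_mul, smul_eq_mul]
  exact add_pos_of_nonneg_of_pos (mul_nonneg ha.le (hφK x hx)) (mul_pos hb hφv)

theorem closure_convexHull_insert_diff {P f : Set E} (hP : Convex ℝ P) (hPclosed : IsClosed P)
    (hfP : f ⊆ P) {v : E} (hvis : visiblePart P v ⊆ f) (hΔ : IsClosed (convexHull ℝ (insert v f)))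
    (φ : E →ᵃ[ℝ] ℝ) (hφP : ∀ x ∈ P, φ x ≤ 0) (hφf : ∀ x ∈ f, φ x = 0) (hφv : 0 < φ v) :
    closure (convexHull ℝ (insert v P) \ P) = convexHull ℝ (insert v f) := by
  set Δ := convexHull ℝ (insert v f)
  have hdiff : convexHull ℝ (insert v P) \ P = Δ \ P := by
    refine Subset.antisymm (fun x ⟨hx, hxP⟩ => ⟨?_, hxP⟩)
      (sdiff_subset_sdiff_left (convexHull_mono (insert_subset_insert hfP)))
    have hx' := (hP.convexHull_insert_subset_union_visiblePart hPclosed v hx).resolve_left hxP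
    exact convexHull_mono (insert_subset_insert hvis) hx'
  have hpos : Δ ⊆ closure {x ∈ Δ | 0 < φ x} :=
    (convex_convexHull ℝ _).subset_closure_setOf_pos (subset_convexHull ℝ _ (mem_insert v f)) φ
      (fun x hx => nonneg_of_mem_convexHull_insert φ hφf hφv hx) hφv
  refine hdiff ▸ Subset.antisymm (closure_minimal sdiff_subset hΔ) (hpos.trans (closure_mono ?_))
  exact fun x ⟨hx, hφx⟩ => ⟨hx, fun hxP => (hφP x hxP).not_gt hφx⟩

theorem isExposed_setOf_eq_zero [T2Space E] [FiniteDimensional ℝ E] {K : Set E}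
    (φ : E →ᵃ[ℝ] ℝ) (hφ : ∀ x ∈ K, 0 ≤ φ x) : IsExposed ℝ K {x ∈ K | φ x = 0} := by
  rintro ⟨y, hyK, hy0⟩
  have hlin : ∀ x, φ.linear x = φ x - φ 0 := fun x => by
    simpa using φ.linearMap_vsub x 0
  refine ⟨-LinearMap.toContinuousLinearMap φ.linear, Set.ext fun x => and_congr_right fun hx => ?_⟩
  simp only [neg_apply, LinearMap.coe_toContinuousLinearMap', hlin, neg_le_neg_iff,
    sub_le_sub_iff_right]
  refine ⟨fun hx0 z hz => hx0 ▸ hφ z hz, fun hmin => ?_⟩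
  exact le_antisymm (hy0 ▸ hmin y hyK) (hφ x hx)

end

section

variable {E : Type*} [NormedAddCommGroup E] [NormedSpace ℝ E]

theorem IsPolytope.convex {P : Set E} (hP : IsPolytope P) : Convex ℝ P := by
  obtain ⟨s, rfl⟩ := hP
  exact convex_convexHull ℝ _

theorem IsPolytope.isCompact {P : Set E} (hP : IsPolytope P) : IsCompact P := by
  obtain ⟨s, rfl⟩ := hP
  exact s.finite_toSet.isCompact_convexHull ℝ

theorem IsPolytope.convexHull_insert {P : Set E} (hP : IsPolytope P) (v : E) :
    IsPolytope (convexHull ℝ (insert v P)) := by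
  classical
  obtain ⟨s, rfl⟩ := hP
  refine ⟨insert v s, ?_⟩
  rw [Finset.coe_insert, ← union_singleton, ← union_singleton, convexHull_convexHull_union_left]

theorem IsPolytope.finite_extremePoints {P : Set E} (hP : IsPolytope P) :
    (P.extremePoints ℝ).Finite := by
  obtain ⟨s, rfl⟩ := hP
  exact s.finite_toSet.subset extremePoints_convexHull_subset

theorem convexHull_extremePoints_of_finite {K : Set E} (hK : IsCompact K) (hKc : Convex ℝ K)
    (hext : (K.extremePoints ℝ).Finite) : convexHull ℝ (K.extremePoints ℝ) = K := by
  rw [← (hext.isClosed_convexHull ℝ).closure_eq, closure_convexHull_extremePoints hK hKc]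

theorem IsPolytope.convexHull_extremePoints {P : Set E} (hP : IsPolytope P) :
    convexHull ℝ (P.extremePoints ℝ) = P :=
  convexHull_extremePoints_of_finite hP.isCompact hP.convex hP.finite_extremePoints

theorem IsPolytope.of_isExposed {P F : Set E} (hP : IsPolytope P) (hF : IsExposed ℝ P F) :
    IsPolytope F := by
  have hext : (F.extremePoints ℝ).Finite :=
    hP.finite_extremePoints.subset hF.isExtreme.extremePoints_subset_extremePoints
  refine ⟨hext.toFinset, ?_⟩
  rw [hext.coe_toFinset,
    convexHull_extremePoints_of_finite (hF.isCompact hP.isCompact) (hF.convex hP.convex) hext]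

theorem IsFacet.nonempty_right {F P : Set E} (h : IsFacet F P) : P.Nonempty := by
  rw [nonempty_iff_ne_empty]
  rintro rfl
  have := h.2
  rw [polyDim_empty] at this
  omega

theorem IsPolytope.visiblePart_subset {P f : Set E} (hP : IsPolytope P) (hf : Convex ℝ f)
    {v : E} (hvis : ∀ w ∈ P.extremePoints ℝ, openSegment ℝ v w ∩ P = ∅ → w ∈ f) :
    visiblePart P v ⊆ f := by
  have hext : IsExtreme ℝ (convexHull ℝ (P.extremePoints ℝ)) (visiblePart P v) := by
    rw [hP.convexHull_extremePoints]
    exact hP.convex.isExtreme_visiblePart v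
  calc visiblePart P v
      ⊆ convexHull ℝ (visiblePart P v ∩ P.extremePoints ℝ) := hext.subset_convexHull_inter
    _ ⊆ convexHull ℝ f := convexHull_mono fun w hw => hvis w hw.2 hw.1.2
    _ = f := hf.convexHull_eq

theorem isFacet_convexHull_insert [FiniteDimensional ℝ E] {f : Set E} (hf : Convex ℝ f)
    (hne : f.Nonempty) {v : E} (φ : E →ᵃ[ℝ] ℝ) (hφf : ∀ x ∈ f, φ x = 0) (hφv : 0 < φ v) :
    IsFacet f (convexHull ℝ (insert v f)) := by
  refine ⟨?_, (polyDim_convexHull_insert hne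
    (notMem_affineSpan_of_affineMap φ hφf hφv.ne')).symm⟩
  have hexp := isExposed_setOf_eq_zero φ fun x hx => nonneg_of_mem_convexHull_insert φ hφf hφv hx
  rwa [setOf_mem_convexHull_insert_eq_zero hf φ hφf hφv] at hexp

end

theorem stmt9_general (P Q f : Set (EuclideanSpace ℝ (Fin 2))) (v : EuclideanSpace ℝ (Fin 2))
    (hP : IsPolytope P)
    (hedge : IsFacet f P)
    (hQ : Q = convexHull ℝ (f ∪ {v}))
    (hf : f = P ∩ Q)
    -- v is on the opposite side of aff(f) from P
    (hside : ∃ φ : EuclideanSpace ℝ (Fin 2) →ᵃ[ℝ] ℝ,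
      (∀ x ∈ P, φ x ≤ 0) ∧ (∀ x ∈ f, φ x = 0) ∧ 0 < φ v)
    -- every vertex of P visible from v is an endpoint of f
    (hvis : ∀ w ∈ Set.extremePoints ℝ P, openSegment ℝ v w ∩ P = ∅ → w ∈ f) :
    closure (convexHull ℝ (P ∪ {v}) \ P) = convexHull ℝ (f ∪ {v}) ∧
      convexHull ℝ (f ∪ {v}) ∩ P = f ∧
      IsFacet f (convexHull ℝ (f ∪ {v})) ∧
      PyramidalExt P (convexHull ℝ (P ∪ {v})) := by
  obtain ⟨φ, hφP, hφf, hφv⟩ := hside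
  simp only [union_singleton] at hQ ⊢
  have hfP : f ⊆ P := hf ▸ inter_subset_left
  have hvP : v ∉ P := fun h => (hφP v h).not_gt hφv
  have hfconv : Convex ℝ f := hedge.1.convex hP.convex
  have hPclosed : IsClosed P := hP.isCompact.isClosed
  have hvisf : visiblePart P v ⊆ f := hP.visiblePart_subset hfconv hvis
  have hfne : f.Nonempty := by
    obtain ⟨y, hy⟩ := hedge.nonempty_right
    obtain ⟨p, hp, -⟩ :=
      hP.convex.exists_mem_visiblePart_of_mem_segment hPclosed hy (left_mem_segment ℝ v y) hvP
    exact ⟨p, hvisf hp⟩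
  have hfpoly : IsPolytope f := hP.of_isExposed hedge.1
  have hcap : convexHull ℝ (insert v f) ∩ P = f := by rw [← hQ, inter_comm, ← hf]
  have hfacet := isFacet_convexHull_insert hfconv hfne φ hφf hφv
  have hcl := closure_convexHull_insert_diff hP.convex hPclosed hfP hvisf
    (hfpoly.convexHull_insert v).isCompact.isClosed φ hφP hφf hφv
  refine ⟨hcl, hcap, hfacet, hP, hP.convexHull_insert v,
    (subset_insert v P).trans (subset_convexHull ℝ _), ⟨f, v, ?_⟩, by rwa [hcl, hcap]⟩
  rw [hcl, IsPyramidOver, union_singleton]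
  exact ⟨hfpoly, notMem_affineSpan_of_affineMap φ hφf hφv.ne', rfl⟩

theorem stmt9 (P Q f : Set (EuclideanSpace ℝ (Fin 2))) (v : EuclideanSpace ℝ (Fin 2))
    (hP : IsPolytope P) (hdim : polyDim P = 2)
    (hedge : IsFacet f P)
    (hQ : Q = convexHull ℝ (f ∪ {v}))
    (hf : f = P ∩ Q)
    -- v is on the opposite side of aff(f) from P
    (hside : ∃ φ : EuclideanSpace ℝ (Fin 2) →ᵃ[ℝ] ℝ,
      (∀ x ∈ P, φ x ≤ 0) ∧ (∀ x ∈ f, φ x = 0) ∧ 0 < φ v)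
    -- every vertex of P visible from v is an endpoint of f
    (hvis : ∀ w ∈ Set.extremePoints ℝ P, openSegment ℝ v w ∩ P = ∅ → w ∈ f) :
    closure (convexHull ℝ (P ∪ {v}) \ P) = convexHull ℝ (f ∪ {v}) ∧
      convexHull ℝ (f ∪ {v}) ∩ P = f ∧
      IsFacet f (convexHull ℝ (f ∪ {v})) ∧
      PyramidalExt P (convexHull ℝ (P ∪ {v})) :=
  stmt9_general P Q f v hP hedge hQ hf hside hvis
end

section
/- Let P be a convex polygon in ℝ² and v ∉ P a point such that exactly one edge e of P is visible from v. Then conv(P ∪ {v}) is a pyramidal extension of P: closure(conv(P ∪ {v}) \ P) is the triangle conv(e ∪ {v}), whose intersection with P is the edge e. -/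
open Set

/-!
A point `x` outside the polygon `P` sees an edge: separate `x` from `P` by a line, push the line
until it touches a vertex `y`, then rotate it about the line through `x` and `y` until it touches a
second vertex. If `x ∈ conv (P ∪ {v}) \ P` sees an edge through a functional `ψ`, then `ψ v > 0`
(otherwise `ψ ≤ 0` on `conv (P ∪ {v})`), so that edge is visible from `v` too and hence is `e`.
Functionals vanishing on `e` are proportional, so `x` lies strictly beyond the line of `e`: that
line cuts `conv (P ∪ {v})` into `P` and the triangle `conv (e ∪ {v})`.
-/

open Module

section Polygon

variable {E : Type*} [NormedAddCommGroup E] [NormedSpace ℝ E]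

lemma AffineMap.linear_apply_eq_sub (φ : E →ᵃ[ℝ] ℝ) (z : E) : φ.linear z = φ z - φ 0 := by
  simp [φ.decomp']

lemma AffineMap.linear_ne_zero_of_apply_ne {φ : E →ᵃ[ℝ] ℝ} {x y : E} (h : φ x ≠ φ y) :
    φ.linear ≠ 0 := fun h0 => h <| by
  have hx := φ.linear_apply_eq_sub x
  have hy := φ.linear_apply_eq_sub y
  simp only [h0, LinearMap.zero_apply] at hx hy
  linarith

lemma AffineMap.apply_nonpos_of_mem_convexHull {φ : E →ᵃ[ℝ] ℝ} {s : Set E}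
    (h : ∀ y ∈ s, φ y ≤ 0) {x : E} (hx : x ∈ convexHull ℝ s) : φ x ≤ 0 :=
  convexHull_min h ((convex_Iic 0).affine_preimage φ) hx

lemma exists_affineMap_nonpos_pos_eq_zero {s : Finset E} (hs : s.Nonempty) {x : E}
    (hx : x ∉ convexHull ℝ (s : Set E)) :
    ∃ ψ : E →ᵃ[ℝ] ℝ, (∀ q ∈ s, ψ q ≤ 0) ∧ 0 < ψ x ∧ ∃ y ∈ s, ψ y = 0 := by
  obtain ⟨f, u, hfu, hux⟩ := geometric_hahn_banach_closed_point (convex_convexHull ℝ _)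
    (s.finite_toSet.isCompact_convexHull (𝕜 := ℝ)).isClosed hx
  obtain ⟨y, hy, hmax⟩ := s.exists_max_image f hs
  refine ⟨(f : E →ₗ[ℝ] ℝ).toAffineMap - AffineMap.const ℝ E (f y),
    fun q hq => by simpa using hmax q hq, ?_, y, hy, by simp⟩
  have := hfu y (subset_convexHull ℝ _ hy)
  simp only [AffineMap.coe_sub, Pi.sub_apply, LinearMap.coe_toAffineMap,
    ContinuousLinearMap.coe_coe, AffineMap.const_apply, sub_pos]
  linarith

variable [FiniteDimensional ℝ E]

lemma polyDim_eq_zero_iff {S : Set E} : polyDim S = 0 ↔ S.Subsingleton := by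
  rw [polyDim, direction_affineSpan, Submodule.finrank_eq_zero,
    vectorSpan_eq_bot_iff_subsingleton]

lemma LinearMap.ker_eq_span_singleton_of_finrank_eq_two (hE : finrank ℝ E = 2)
    {f : E →ₗ[ℝ] ℝ} (hf : f ≠ 0) {u : E} (hu : u ≠ 0) (hfu : f u = 0) :
    LinearMap.ker f = ℝ ∙ u := by
  have hlt : finrank ℝ (LinearMap.ker f) < 2 :=
    hE ▸ Submodule.finrank_lt (by rwa [Ne, LinearMap.ker_eq_top])
  refine (Submodule.eq_of_le_of_finrank_le ((Submodule.span_singleton_le_iff_mem _ _).2 hfu)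
    ?_).symm
  rw [finrank_span_singleton hu]
  omega

lemma polyDim_le_one_of_forall_eq (hE : finrank ℝ E = 2) {φ : E →ᵃ[ℝ] ℝ} (hφ : φ.linear ≠ 0)
    {S : Set E} {c : ℝ} (hS : ∀ y ∈ S, φ y = c) : polyDim S ≤ 1 := by
  have hle : vectorSpan ℝ S ≤ LinearMap.ker φ.linear := by
    rw [vectorSpan_def, Submodule.span_le]
    rintro _ ⟨y, hy, z, hz, rfl⟩
    simp only [vsub_eq_sub, SetLike.mem_coe, LinearMap.mem_ker, map_sub]
    simp [AffineMap.linear_apply_eq_sub, hS y hy, hS z hz]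
  have hlt : finrank ℝ (LinearMap.ker φ.linear) < 2 :=
    hE ▸ Submodule.finrank_lt (by rwa [Ne, LinearMap.ker_eq_top])
  have := Submodule.finrank_mono hle
  rw [polyDim, direction_affineSpan]
  omega

/-- In the plane, affine functions vanishing at two common points are proportional. -/
lemma AffineMap.apply_mul_apply_comm_of_eq_zero (hE : finrank ℝ E = 2) {φ ψ : E →ᵃ[ℝ] ℝ}
    (hφ : φ.linear ≠ 0) {a b : E} (hab : a ≠ b) (hφa : φ a = 0) (hφb : φ b = 0)
    (hψa : ψ a = 0) (hψb : ψ b = 0) (x y : E) : φ y * ψ x = φ x * ψ y := by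
  have hker : LinearMap.ker φ.linear ≤ LinearMap.ker ψ.linear := by
    rw [LinearMap.ker_eq_span_singleton_of_finrank_eq_two hE hφ (sub_ne_zero.2 hab.symm)
      (by simp [map_sub, AffineMap.linear_apply_eq_sub, hφa, hφb]),
      Submodule.span_singleton_le_iff_mem]
    simp [map_sub, AffineMap.linear_apply_eq_sub, hψa, hψb]
  have key : φ y • (x - a) - φ x • (y - a) ∈ LinearMap.ker φ.linear := by
    simp only [LinearMap.mem_ker, map_sub, map_smul, smul_eq_mul]
    simp only [AffineMap.linear_apply_eq_sub, hφa]
    ring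
  have h := LinearMap.mem_ker.1 (hker key)
  simp only [map_sub, map_smul, smul_eq_mul] at h
  simp only [AffineMap.linear_apply_eq_sub, hψa] at h
  linarith

lemma IsExposed.eq_of_subset_of_polyDim_le {P F G : Set E} (hF : IsExposed ℝ P F)
    (hFne : F.Nonempty) (hFG : F ⊆ G) (hGP : G ⊆ P) (hdim : polyDim G ≤ polyDim F) :
    F = G := by
  obtain ⟨l, hl⟩ := hF hFne
  obtain ⟨a, ha⟩ := hFne
  have haP : a ∈ P ∧ ∀ w ∈ P, l w ≤ l a := by rw [hl] at ha; exact ha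
  have hspan : affineSpan ℝ F = affineSpan ℝ G := by
    have hle := affineSpan_mono ℝ hFG
    exact AffineSubspace.eq_of_direction_eq_of_nonempty_of_le
      (Submodule.eq_of_le_of_finrank_le (AffineSubspace.direction_le hle) hdim)
      ((affineSpan_nonempty ℝ).2 ⟨a, ha⟩) hle
  have hlevel : affineSpan ℝ F ≤ AffineSubspace.mk' a (LinearMap.ker (l : E →ₗ[ℝ] ℝ)) := by
    refine affineSpan_le.2 fun z hz => ?_
    rw [hl] at hz
    have : l z = l a := le_antisymm (haP.2 z hz.1) (hz.2 a haP.1)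
    simp [AffineSubspace.mem_mk', this]
  refine hFG.antisymm fun y hy => ?_
  have hya := hlevel (hspan ▸ subset_affineSpan ℝ G hy)
  simp only [AffineSubspace.mem_mk', LinearMap.mem_ker, vsub_eq_sub, map_sub,
    ContinuousLinearMap.coe_coe, sub_eq_zero] at hya
  rw [hl]
  exact ⟨hGP hy, fun w hw => hya ▸ haP.2 w hw⟩

lemma isFacet_sep_eq_zero (hE : finrank ℝ E = 2) {P : Set E} (hP : polyDim P = 2)
    {ψ : E →ᵃ[ℝ] ℝ} (hψP : ∀ y ∈ P, ψ y ≤ 0) (hψ : ψ.linear ≠ 0) {p q : E} (hp : p ∈ P)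
    (hq : q ∈ P) (hpq : p ≠ q) (hψp : ψ p = 0) (hψq : ψ q = 0) :
    IsFacet {y ∈ P | ψ y = 0} P := by
  refine ⟨fun _ => ⟨LinearMap.toContinuousLinearMap ψ.linear, ?_⟩, ?_⟩
  · ext y
    simp only [mem_ofPred_eq, LinearMap.coe_toContinuousLinearMap', AffineMap.linear_apply_eq_sub]
    refine and_congr_right fun hy => ⟨fun h w hw => ?_, fun h => ?_⟩
    · linarith [hψP w hw]
    · linarith [h p hp, hψP y hy]
  · have h1 : polyDim {y ∈ P | ψ y = 0} ≤ 1 :=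
      polyDim_le_one_of_forall_eq hE hψ fun y hy => hy.2
    have h2 : polyDim {y ∈ P | ψ y = 0} ≠ 0 :=
      polyDim_eq_zero_iff.not.2 fun h => hpq (h ⟨hp, hψp⟩ ⟨hq, hψq⟩)
    omega

lemma exists_affineMap_eq_zero_eq_zero_pos (hE : finrank ℝ E = 2) {S : Set E}
    (hS : polyDim S = 2) (x y : E) :
    ∃ χ : E →ᵃ[ℝ] ℝ, χ x = 0 ∧ χ y = 0 ∧ ∃ q ∈ S, 0 < χ q := by
  have hlt : (ℝ ∙ (x - y)) < ⊤ := by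
    refine lt_top_iff_ne_top.2 fun h => ?_
    have := finrank_span_le_card (R := ℝ) ({x - y} : Set E)
    rw [h, finrank_top, hE] at this
    simp at this
  obtain ⟨f, hf, hker⟩ := (ℝ ∙ (x - y)).exists_le_ker_of_lt_top hlt
  have hfxy : f x = f y := by
    have := hker (Submodule.mem_span_singleton_self (x - y))
    rwa [LinearMap.mem_ker, map_sub, sub_eq_zero] at this
  set χ : E →ᵃ[ℝ] ℝ := f.toAffineMap - AffineMap.const ℝ E (f y) with hχ
  have hχ_apply (z : E) : χ z = f z - f y := rfl
  by_contra! hneg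
  have hzero : ∀ q ∈ S, χ q = 0 := fun q hq => le_antisymm
    (hneg χ (by simp [hχ_apply, hfxy]) (by simp [hχ_apply]) q hq)
    (by simpa [hχ_apply] using hneg (-χ) (by simp [hχ_apply, hfxy]) (by simp [hχ_apply]) q hq)
  have := polyDim_le_one_of_forall_eq hE (by simpa [hχ] using hf) hzero
  omega

lemma Finset.exists_nonneg_add_mul_nonpos_eq_zero {ι : Type*} (s : Finset ι) {f g : ι → ℝ}
    (hf : ∀ i ∈ s, f i ≤ 0) (hg : ∃ i ∈ s, 0 < g i) :
    ∃ t : ℝ, 0 ≤ t ∧ (∀ i ∈ s, f i + t * g i ≤ 0) ∧ ∃ j ∈ s, 0 < g j ∧ f j + t * g j = 0 := by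
  classical
  obtain ⟨j, hj, hmin⟩ := (s.filter fun i => 0 < g i).exists_min_image (fun i => -f i / g i)
    (by simpa [Finset.filter_nonempty_iff] using hg)
  rw [Finset.mem_filter] at hj
  have ht : 0 ≤ -f j / g j := div_nonneg (neg_nonneg.2 (hf j hj.1)) hj.2.le
  refine ⟨-f j / g j, ht, fun i hi => ?_,
    j, hj.1, hj.2, by rw [div_mul_cancel₀ _ hj.2.ne']; ring⟩
  rcases le_or_gt (g i) 0 with hgi | hgi
  · linarith [hf i hi, mul_nonpos_of_nonneg_of_nonpos ht hgi]
  · have := hmin i (Finset.mem_filter.2 ⟨hi, hgi⟩)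
    rw [le_div_iff₀ hgi] at this
    linarith

lemma exists_visibleFacet_of_notMem (hE : finrank ℝ E = 2) {s : Finset E}
    (hP : polyDim (convexHull ℝ (s : Set E)) = 2) {x : E}
    (hx : x ∉ convexHull ℝ (s : Set E)) : ∃ F, VisibleFacet (convexHull ℝ (s : Set E)) F x := by
  have hs : s.Nonempty := by
    rw [Finset.nonempty_iff_ne_empty]
    rintro rfl
    rw [Finset.coe_empty, convexHull_empty, polyDim_eq_zero_iff.2 subsingleton_empty] at hP
    omega
  obtain ⟨ψ, hψs, hψx, y, hy, hψy⟩ := exists_affineMap_nonpos_pos_eq_zero hs hx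
  obtain ⟨χ, hχx, hχy, hχpos⟩ := exists_affineMap_eq_zero_eq_zero_pos hE (S := s)
    (by rwa [polyDim, ← affineSpan_convexHull]) x y
  obtain ⟨t, -, hle, q, hq, hχq, hψq⟩ := s.exists_nonneg_add_mul_nonpos_eq_zero hψs hχpos
  set ψ' := ψ + t • χ
  have hψ' (z : E) : ψ' z = ψ z + t * χ z := rfl
  have hψ'P : ∀ z ∈ convexHull ℝ (s : Set E), ψ' z ≤ 0 := fun z =>
    AffineMap.apply_nonpos_of_mem_convexHull fun q hq => hψ' q ▸ hle q hq
  have hψ'x : 0 < ψ' x := by simpa [hψ', hχx] using hψx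
  have hψ'y : ψ' y = 0 := by simp [hψ', hψy, hχy]
  have hqy : q ≠ y := by rintro rfl; linarith
  refine ⟨_, isFacet_sep_eq_zero hE hP hψ'P
    (AffineMap.linear_ne_zero_of_apply_ne (hψ'x.ne'.trans_eq hψ'y.symm))
    (subset_convexHull ℝ _ hq) (subset_convexHull ℝ _ hy) hqy (hψ' q ▸ hψq) hψ'y,
    ψ', hψ'P, fun z hz => hz.2, hψ'x⟩

lemma pos_of_mem_convexHull_union_of_notMem (hE : finrank ℝ E = 2) {s : Finset E}
    (hP : polyDim (convexHull ℝ (s : Set E)) = 2) {e : Set E} (he : e.Nontrivial) {v : E}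
    (huniq : ∀ F, VisibleFacet (convexHull ℝ (s : Set E)) F v → F = e) {φ : E →ᵃ[ℝ] ℝ}
    (hφe : ∀ y ∈ e, φ y = 0) (hφv : 0 < φ v) {x : E}
    (hxQ : x ∈ convexHull ℝ (convexHull ℝ (s : Set E) ∪ {v}))
    (hxP : x ∉ convexHull ℝ (s : Set E)) : 0 < φ x := by
  obtain ⟨F, hF, ψ, hψP, hψF, hψx⟩ := exists_visibleFacet_of_notMem hE hP hxP
  have hψv : 0 < ψ v := by
    by_contra! hψv
    refine hψx.not_ge (AffineMap.apply_nonpos_of_mem_convexHull ?_ hxQ)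
    rintro y (hy | rfl)
    exacts [hψP y hy, hψv]
  obtain rfl := huniq F ⟨hF, ψ, hψP, hψF, hψv⟩
  obtain ⟨a, ha, b, hb, hab⟩ := he
  have hφ : φ.linear ≠ 0 := AffineMap.linear_ne_zero_of_apply_ne (x := v) (y := a)
    (by rw [hφe a ha]; exact hφv.ne')
  have hprop := AffineMap.apply_mul_apply_comm_of_eq_zero hE hφ hab (hφe a ha) (hφe b hb)
    (hψF a ha) (hψF b hb) x v
  exact pos_of_mul_pos_left (hprop ▸ mul_pos hφv hψx) hψv.le

lemma convexHull_sep_eq_zero_union_singleton {P : Set E} (hPc : Convex ℝ P) (hPne : P.Nonempty)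
    {φ : E →ᵃ[ℝ] ℝ} (hφP : ∀ y ∈ P, φ y ≤ 0) {v : E} (hφv : 0 ≤ φ v)
    (hpos : ∀ x ∈ convexHull ℝ (P ∪ {v}), x ∉ P → 0 < φ x) :
    convexHull ℝ ({y ∈ P | φ y = 0} ∪ {v}) = convexHull ℝ (P ∪ {v}) ∩ {y | 0 ≤ φ y} := by
  have hvT : v ∈ convexHull ℝ ({y ∈ P | φ y = 0} ∪ {v}) := subset_convexHull ℝ _ (Or.inr rfl)
  refine (convexHull_min ?_ ((convex_convexHull ℝ _).inter
    ((convex_Ici 0).affine_preimage φ))).antisymm ?_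
  · rintro y (⟨hyP, hy⟩ | rfl)
    exacts [⟨subset_convexHull ℝ _ (Or.inl hyP), hy.ge⟩, ⟨subset_convexHull ℝ _ (Or.inr rfl), hφv⟩]
  rintro x ⟨hxQ, hx⟩
  by_cases hxP : x ∈ P
  · exact subset_convexHull ℝ _ (Or.inl ⟨hxP, le_antisymm (hφP x hxP) hx⟩)
  have hxQ' := hxQ
  rw [union_singleton, convexHull_insert hPne, hPc.convexHull_eq, mem_convexJoin] at hxQ'
  obtain ⟨_, hv, p, hp, hxvp⟩ := hxQ'
  rw [mem_singleton_iff.1 hv] at hxvp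
  obtain ⟨y, hyxp, hy⟩ : ∃ y ∈ segment ℝ x p, φ y = 0 :=
    (convex_segment x p).isPreconnected.intermediate_value (right_mem_segment ℝ x p)
      (left_mem_segment ℝ x p) φ.continuous_of_finiteDimensional.continuousOn ⟨hφP p hp, hx⟩
  have hyP : y ∈ P := by
    by_contra hyP
    have := hpos y ((convex_convexHull ℝ _).segment_subset hxQ
      (subset_convexHull ℝ _ (Or.inl hp)) hyxp) hyP
    linarith
  have hxvy : x ∈ segment ℝ v y :=
    ((mem_segment_iff_wbtw.1 hxvp).trans_right_left (mem_segment_iff_wbtw.1 hyxp)).mem_segment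
  exact (convex_convexHull ℝ _).segment_subset hvT
    (subset_convexHull ℝ _ (Or.inl ⟨hyP, hy⟩)) hxvy

lemma closure_diff_eq_inter_setOf_nonneg {P Q : Set E} (hQ : IsClosed Q) (hQc : Convex ℝ Q)
    {φ : E →ᵃ[ℝ] ℝ} (hφP : ∀ y ∈ P, φ y ≤ 0) {v : E} (hvQ : v ∈ Q) (hφv : 0 < φ v)
    (hpos : ∀ x ∈ Q, x ∉ P → 0 < φ x) : closure (Q \ P) = Q ∩ {y | 0 ≤ φ y} := by
  have hclosed : IsClosed (Q ∩ {y | 0 ≤ φ y}) :=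
    hQ.inter (isClosed_le continuous_const φ.continuous_of_finiteDimensional)
  have hsub : Q \ P ⊆ Q ∩ {y | 0 ≤ φ y} := fun x hx => ⟨hx.1, (hpos x hx.1 hx.2).le⟩
  refine (closure_minimal hsub hclosed).antisymm ?_
  rintro x ⟨hxQ, hx⟩
  have hseg : openSegment ℝ x v ⊆ Q \ P := by
    rintro z ⟨a, b, ha, hb, hab, rfl⟩
    refine ⟨hQc hxQ hvQ ha.le hb.le hab, fun hz => ?_⟩
    have := hφP _ hz
    rw [Convex.combo_affine_apply hab, smul_eq_mul, smul_eq_mul] at this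
    linarith [mul_nonneg ha.le (show 0 ≤ φ x from hx), mul_pos hb hφv]
  exact closure_mono hseg (segment_subset_closure_openSegment (left_mem_segment ℝ x v))

end Polygon

theorem stmt10_general (P e : Set (EuclideanSpace ℝ (Fin 2))) (v : EuclideanSpace ℝ (Fin 2))
    (hP : IsPolytope P) (hdim : polyDim P = 2)
    (hvis : VisibleFacet P e v)
    (huniq : ∀ F : Set (EuclideanSpace ℝ (Fin 2)), VisibleFacet P F v → F = e) :
    closure (convexHull ℝ (P ∪ {v}) \ P) = convexHull ℝ (e ∪ {v}) ∧
      convexHull ℝ (e ∪ {v}) ∩ P = e := by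
  obtain ⟨s, rfl⟩ := hP
  obtain ⟨⟨he_exp, he_dim⟩, φ, hφP, hφe, hφv⟩ := hvis
  have hE : finrank ℝ (EuclideanSpace ℝ (Fin 2)) = 2 := finrank_euclideanSpace_fin
  have he : e.Nontrivial := not_subsingleton_iff.1 (polyDim_eq_zero_iff.not.1 (by omega))
  obtain ⟨a, ha⟩ := he.nonempty
  have hφ : φ.linear ≠ 0 :=
    AffineMap.linear_ne_zero_of_apply_ne (x := v) (y := a) (by rw [hφe a ha]; exact hφv.ne')
  have he_eq : e = {y ∈ convexHull ℝ (s : Set _) | φ y = 0} :=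
    he_exp.eq_of_subset_of_polyDim_le ⟨a, ha⟩ (fun y hy => ⟨he_exp.subset hy, hφe y hy⟩)
      (fun y hy => hy.1) (le_of_le_of_eq (polyDim_le_one_of_forall_eq hE hφ
        fun y (hy : y ∈ {y ∈ convexHull ℝ (s : Set _) | φ y = 0}) => hy.2) (by omega))
  have hpos := fun x => pos_of_mem_convexHull_union_of_notMem hE hdim he huniq hφe hφv (x := x)
  have hQ : IsClosed (convexHull ℝ (convexHull ℝ (s : Set _) ∪ {v})) := by
    rw [convexHull_convexHull_union_left]
    exact ((s.finite_toSet.union (finite_singleton v)).isCompact_convexHull (𝕜 := ℝ)).isClosed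
  have hT := convexHull_sep_eq_zero_union_singleton (convex_convexHull ℝ _)
    (⟨a, he_exp.subset ha⟩) hφP hφv.le hpos
  rw [← he_eq] at hT
  refine ⟨(closure_diff_eq_inter_setOf_nonneg hQ (convex_convexHull ℝ _) hφP
    (subset_convexHull ℝ _ (Or.inr rfl)) hφv hpos).trans hT.symm, ?_⟩
  rw [hT, he_eq]
  ext y
  exact ⟨fun ⟨⟨_, hy⟩, hyP⟩ => ⟨hyP, le_antisymm (hφP y hyP) hy⟩,
    fun ⟨hyP, hy⟩ => ⟨⟨subset_convexHull ℝ _ (Or.inl hyP), hy.ge⟩, hyP⟩⟩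

theorem stmt10 (P e : Set (EuclideanSpace ℝ (Fin 2))) (v : EuclideanSpace ℝ (Fin 2))
    (hP : IsPolytope P) (hdim : polyDim P = 2) (hv : v ∉ P)
    (hvis : VisibleFacet P e v)
    (huniq : ∀ F : Set (EuclideanSpace ℝ (Fin 2)), VisibleFacet P F v → F = e) :
    closure (convexHull ℝ (P ∪ {v}) \ P) = convexHull ℝ (e ∪ {v}) ∧
      convexHull ℝ (e ∪ {v}) ∩ P = e :=
  stmt10_general P e v hP hdim hvis huniq
end

section
/- Let P ⊂ ℝ^d be a full-dimensional polytope and v ∉ P. Then conv(P ∪ {v}) \ P equals the union over all facets F of P visible from v of the sets conv(F ∪ {v}) \ F; in particular if exactly one facet F is visible from v then closure(conv(P ∪ {v}) \ P) = conv(F ∪ {v}). -/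
open Set

/-!
A point `x ∈ conv (P ∪ {v}) \ P` lies on a segment from some `p ∈ P` to `v`; let `y` be the last
point of `P` on it. Since `P = conv s` is a polytope, the cone spanned by `s - y` is closed (conic
Carathéodory), so Farkas' lemma yields a functional `l`, maximal on `P` at `y`, with `l y < l v`.
If the face exposed by `l` is not a facet, a functional vanishing on that face and on one more
vertex lets us pivot `l` to a functional with the same properties and a larger face; hence some
such `l` exposes a facet `F`, which is visible from `v`, and `x ∈ [y, v] ⊆ conv (F ∪ {v})`.
Conversely, the functional of a visible facet is positive on `conv (F ∪ {v}) \ F`, so these points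
avoid `P`. If `F` is the only visible facet, every point of the closed set `conv (F ∪ {v})` is a
limit of points of its open segment towards `v`, which avoid `F`.
-/

open Set Filter Topology PointedCone

section Cone

variable {E : Type*} [AddCommGroup E] [Module ℝ E]

theorem PointedCone.mem_hull_finset_iff {t : Finset E} {x : E} :
    x ∈ hull ℝ (t : Set E) ↔ ∃ c : E → ℝ, (∀ z ∈ t, 0 ≤ c z) ∧ ∑ z ∈ t, c z • z = x := by
  refine ⟨fun hx => ?_, ?_⟩
  · obtain ⟨f, -, rfl⟩ := Submodule.mem_span_finset.1 hx
    exact ⟨fun z => f z, fun z _ => (f z).2, rfl⟩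
  · rintro ⟨c, hc, rfl⟩
    exact Submodule.sum_mem _ fun z hz => smul_mem _ (hc z hz) (subset_hull hz)

theorem PointedCone.exists_mem_hull_erase_of_not_linearIndepOn [DecidableEq E] {t : Finset E}
    {x : E} (ht : ¬LinearIndepOn ℝ id (t : Set E)) (hx : x ∈ hull ℝ (t : Set E)) :
    ∃ z ∈ t, x ∈ hull ℝ (t.erase z : Set E) := by
  obtain ⟨c, hc, rfl⟩ := mem_hull_finset_iff.1 hx
  obtain ⟨g, hg, i, hi, hgi⟩ := not_linearIndepOn_finset_iff.1 ht
  simp only [id] at hg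
  wlog hpos : 0 < g i generalizing g
  · exact this (-g) (by simpa using hgi) (by simp [hg])
      (by simpa using hgi.lt_of_le (not_lt.1 hpos))
  obtain ⟨z, hzT, hmin⟩ := (t.filter (0 < g ·)).exists_min_image (fun z => c z / g z)
    ⟨i, Finset.mem_filter.2 ⟨hi, hpos⟩⟩
  obtain ⟨hzt, hgz⟩ := Finset.mem_filter.1 hzT
  have hcz : 0 ≤ c z / g z := div_nonneg (hc z hzt) hgz.le
  refine ⟨z, hzt, mem_hull_finset_iff.2 ⟨fun w => c w - c z / g z * g w, fun w hw => ?_, ?_⟩⟩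
  · have hwt := Finset.mem_of_mem_erase hw
    rcases lt_or_ge 0 (g w) with hgw | hgw
    · have := hmin w (Finset.mem_filter.2 ⟨hwt, hgw⟩)
      rw [le_div_iff₀ hgw] at this
      linarith
    · nlinarith [hc w hwt]
  · rw [Finset.sum_erase _ (by simp [div_mul_cancel₀ _ hgz.ne'])]
    simp [sub_smul, Finset.sum_sub_distrib, mul_smul, ← Finset.smul_sum, hg]

end Cone

section ClosedCone

variable {E : Type*} [NormedAddCommGroup E] [NormedSpace ℝ E]

theorem PointedCone.isClosed_hull_of_linearIndepOn {t : Finset E}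
    (ht : LinearIndepOn ℝ id (t : Set E)) : IsClosed (hull ℝ (t : Set E) : Set E) := by
  let L := Fintype.linearCombination ℝ (Subtype.val : t → E)
  have hL : Function.Injective L :=
    linearIndependent_iff_injective_fintypeLinearCombination.1 ht
  have : (hull ℝ (t : Set E) : Set E) = L '' Ici 0 := by
    ext x
    simp only [SetLike.mem_coe, Submodule.mem_span_finset', mem_image, mem_Ici]
    constructor
    · rintro ⟨f, rfl⟩
      exact ⟨fun z => f z, fun z => (f z).2, by simp [L, Fintype.linearCombination_apply]⟩
    · rintro ⟨c, hc, rfl⟩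
      exact ⟨fun z => ⟨c z, hc z⟩, by simp [L, Fintype.linearCombination_apply]⟩
  rw [this]
  exact (L.isClosedEmbedding_of_injective (LinearMap.ker_eq_bot.2 hL)).isClosedMap _ isClosed_Ici

theorem PointedCone.isClosed_hull_finset [FiniteDimensional ℝ E] (t : Finset E) :
    IsClosed (hull ℝ (t : Set E) : Set E) := by
  classical
  induction t using Finset.strongInduction with
  | H t ih =>
  by_cases ht : LinearIndepOn ℝ id (t : Set E)
  · exact isClosed_hull_of_linearIndepOn ht
  have : (hull ℝ (t : Set E) : Set E) = ⋃ z ∈ t, hull ℝ (t.erase z : Set E) :=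
    Subset.antisymm (fun x hx => by simpa using exists_mem_hull_erase_of_not_linearIndepOn ht hx)
      (iUnion₂_subset fun z _ => Submodule.span_mono (by simp))
  rw [this]
  exact isClosed_biUnion_finset fun z hz => by simpa using ih _ (Finset.erase_ssubset hz)

theorem PointedCone.exists_dual_nonpos_of_notMem_hull [FiniteDimensional ℝ E] {t : Finset E}
    {u : E} (hu : u ∉ hull ℝ (t : Set E)) : ∃ l : StrongDual ℝ E, (∀ z ∈ t, l z ≤ 0) ∧ 0 < l u := by
  obtain ⟨f, hf, hfu⟩ :=
    ProperCone.hyperplane_separation_point (C := ⟨hull ℝ (t : Set E), isClosed_hull_finset t⟩) hu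
  exact ⟨-f, fun z hz => by simpa using hf z (subset_hull hz), by simpa using hfu⟩

end ClosedCone

section AffineDimension

variable {E : Type*} [NormedAddCommGroup E] [NormedSpace ℝ E]

theorem vectorSpan_le_ker_of_forall_eq {A : Set E} {l : E →ₗ[ℝ] ℝ} {c : ℝ}
    (h : ∀ a ∈ A, l a = c) : vectorSpan ℝ A ≤ LinearMap.ker l :=
  Submodule.span_le.2 <| by rintro _ ⟨a, ha, b, hb, rfl⟩; simp [h a ha, h b hb]

theorem apply_eq_of_mem_affineSpan {A : Set E} {l : StrongDual ℝ E} {c : ℝ}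
    (h : ∀ a ∈ A, l a = c) {x : E} (hx : x ∈ affineSpan ℝ A) : l x = c := by
  obtain ⟨a, ha⟩ := (affineSpan_nonempty ℝ).1 ⟨x, hx⟩
  have := vectorSpan_le_ker_of_forall_eq (l := (l : E →ₗ[ℝ] ℝ)) h
    (vsub_mem_vectorSpan_of_mem_affineSpan_of_mem_affineSpan hx (subset_affineSpan ℝ A ha))
  simpa [sub_eq_zero, h a ha] using this

theorem polyDim_add_one_le_of_forall_eq [FiniteDimensional ℝ E] {A : Set E} {l : StrongDual ℝ E}
    (hl : l ≠ 0) {c : ℝ} (h : ∀ a ∈ A, l a = c) : polyDim A + 1 ≤ Module.finrank ℝ E := by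
  have hl' : (l : Module.Dual ℝ E) ≠ 0 := fun h0 => hl (ContinuousLinearMap.coe_injective h0)
  rw [← Module.Dual.finrank_ker_add_one_of_ne_zero hl', polyDim, direction_affineSpan]
  exact Nat.add_le_add_right (Submodule.finrank_mono (vectorSpan_le_ker_of_forall_eq h)) 1

theorem polyDim_lt_of_notMem_affineSpan [FiniteDimensional ℝ E] {A B : Set E} (hAB : A ⊆ B)
    (hA : A.Nonempty) {z : E} (hzB : z ∈ B) (hz : z ∉ affineSpan ℝ A) : polyDim A < polyDim B :=
  Submodule.finrank_lt_finrank_of_lt <| AffineSubspace.direction_lt_of_nonempty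
    ((affineSpan_mono ℝ hAB).lt_of_ne fun h => hz (h ▸ subset_affineSpan ℝ B hzB))
    ((affineSpan_nonempty ℝ).2 hA)

theorem affineSpan_eq_top_of_polyDim_eq [FiniteDimensional ℝ E] {A : Set E} (hA : A.Nonempty)
    (h : polyDim A = Module.finrank ℝ E) : affineSpan ℝ A = ⊤ :=
  (AffineSubspace.direction_eq_top_iff_of_nonempty ((affineSpan_nonempty ℝ).2 hA)).1
    (Submodule.eq_top_of_finrank_eq h)

theorem polyDim_eq_finrank_of_affineSpan_eq_top {A : Set E} (h : affineSpan ℝ A = ⊤) :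
    polyDim A = Module.finrank ℝ E := by
  rw [polyDim, h, AffineSubspace.direction_top, finrank_top]

end AffineDimension

section Faces

variable {E : Type*} [NormedAddCommGroup E] [NormedSpace ℝ E]

theorem mem_toExposed_convexHull_iff {A : Set E} {l : StrongDual ℝ E} {x : E} :
    x ∈ l.toExposed (convexHull ℝ A) ↔ x ∈ convexHull ℝ A ∧ ∀ z ∈ A, l z ≤ l x :=
  ⟨fun h => ⟨h.1, fun z hz => h.2 z (subset_convexHull ℝ A hz)⟩,
    fun h => ⟨h.1, fun _ hz =>
      convexHull_min h.2 (convex_halfSpace_le (l : E →ₗ[ℝ] ℝ).isLinear (l x)) hz⟩⟩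

theorem ContinuousLinearMap.apply_eq_of_mem_toExposed {A : Set E} {l : StrongDual ℝ E} {x y : E}
    (hx : x ∈ l.toExposed A) (hy : y ∈ l.toExposed A) : l x = l y :=
  le_antisymm (hy.2 x hx.1) (hx.2 y hy.1)

theorem visibleFacet_toExposed {P : Set E} {l : StrongDual ℝ E} {y v : E}
    (hy : y ∈ l.toExposed P) (hv : l y < l v) (hdim : polyDim (l.toExposed P) + 1 = polyDim P) :
    VisibleFacet P (l.toExposed P) v := by
  refine ⟨⟨ContinuousLinearMap.toExposed.isExposed, hdim⟩,
    (l : E →ₗ[ℝ] ℝ).toAffineMap - AffineMap.const ℝ E (l y), fun x hx => ?_, fun x hx => ?_, ?_⟩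
  · simpa using hy.2 x hx
  · simpa [sub_eq_zero] using l.apply_eq_of_mem_toExposed hx hy
  · simpa using hv

end Faces

section Facets

variable {E : Type*} [NormedAddCommGroup E] [NormedSpace ℝ E] [FiniteDimensional ℝ E]

theorem exists_dual_ne_zero_forall_eq {A : Set E} {y : E} (hy : y ∈ A)
    (hA : vectorSpan ℝ A ≠ ⊤) : ∃ n : StrongDual ℝ E, n ≠ 0 ∧ ∀ x ∈ A, n x = n y := by
  obtain ⟨f, hf, hfA⟩ :=
    Submodule.exists_dual_map_eq_bot_of_lt_top (lt_top_iff_ne_top.2 hA) inferInstance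
  refine ⟨LinearMap.toContinuousLinearMap f, by simpa using hf, fun x hx => ?_⟩
  have := Submodule.mem_map_of_mem (f := f) (vsub_mem_vectorSpan ℝ hx hy)
  rw [hfA, Submodule.mem_bot] at this
  simpa [sub_eq_zero] using this

variable {s : Finset E}

theorem exists_toExposed_polyDim_lt_of_pivot {l n : StrongDual ℝ E} {y v : E}
    (hy : y ∈ l.toExposed (convexHull ℝ s)) (hv : l y < l v)
    (hn : ∀ x ∈ l.toExposed (convexHull ℝ s), n x = n y) (hnv : n y ≤ n v)
    (hz : ∃ z ∈ s, n y < n z) :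
    ∃ l' : StrongDual ℝ E, y ∈ l'.toExposed (convexHull ℝ s) ∧ l' y < l' v ∧
      polyDim (l.toExposed (convexHull ℝ s)) < polyDim (l'.toExposed (convexHull ℝ s)) := by
  classical
  have hly := (mem_toExposed_convexHull_iff.1 hy).2
  obtain ⟨z, hzT, hmin⟩ := (s.filter (n y < n ·)).exists_min_image
    (fun z => (l y - l z) / (n z - n y)) (by simpa [Finset.Nonempty] using hz)
  obtain ⟨hzs, hnz⟩ := Finset.mem_filter.1 hzT
  have hlt : ∀ w ∈ s, n y < n w → l w < l y := fun w hw hnw =>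
    (hly w hw).lt_of_ne fun h => hnw.ne' <| hn w <| mem_toExposed_convexHull_iff.2
      ⟨subset_convexHull ℝ _ hw, fun z hz => h ▸ hly z hz⟩
  -- `θ` is the largest step for which `l + θ • n` still peaks at `y`; the vertex `z` attaining
  -- it joins the face.
  set θ := (l y - l z) / (n z - n y)
  have hθ : 0 < θ := div_pos (sub_pos.2 (hlt z hzs hnz)) (sub_pos.2 hnz)
  have hθz : θ * (n z - n y) = l y - l z := div_mul_cancel₀ _ (sub_pos.2 hnz).ne'
  have hy' : y ∈ (l + θ • n).toExposed (convexHull ℝ s) := by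
    refine mem_toExposed_convexHull_iff.2 ⟨hy.1, fun w hw => ?_⟩
    simp only [add_apply, smul_apply, smul_eq_mul]
    by_cases hnw : n y < n w
    · have := hmin w (Finset.mem_filter.2 ⟨hw, hnw⟩)
      rw [le_div_iff₀ (sub_pos.2 hnw)] at this
      linarith
    · nlinarith [hly w hw]
  refine ⟨l + θ • n, hy', by simp only [add_apply, smul_apply, smul_eq_mul]; nlinarith,
    polyDim_lt_of_notMem_affineSpan (z := z) (fun x hx => ?_) ⟨y, hy⟩ ?_
      fun hz' => hnz.ne' (apply_eq_of_mem_affineSpan hn hz')⟩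
  · refine mem_toExposed_convexHull_iff.2 ⟨hx.1, fun w hw => ?_⟩
    have := (mem_toExposed_convexHull_iff.1 hy').2 w hw
    simp_all [l.apply_eq_of_mem_toExposed hx hy]
  · refine mem_toExposed_convexHull_iff.2 ⟨subset_convexHull ℝ _ hzs, fun w hw => ?_⟩
    have := (mem_toExposed_convexHull_iff.1 hy').2 w hw
    simp only [add_apply, smul_apply, smul_eq_mul] at this ⊢
    linarith

theorem exists_toExposed_polyDim_lt (hs : affineSpan ℝ (s : Set E) = ⊤) {l : StrongDual ℝ E}
    {y v : E} (hy : y ∈ l.toExposed (convexHull ℝ s)) (hv : l y < l v)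
    (hdim : polyDim (l.toExposed (convexHull ℝ s)) + 1 < Module.finrank ℝ E) :
    ∃ l' : StrongDual ℝ E, y ∈ l'.toExposed (convexHull ℝ s) ∧ l' y < l' v ∧
      polyDim (l.toExposed (convexHull ℝ s)) < polyDim (l'.toExposed (convexHull ℝ s)) := by
  set F := l.toExposed (convexHull ℝ s)
  obtain ⟨z₀, hz₀s, hz₀⟩ : ∃ z ∈ s, z ∉ affineSpan ℝ F := by
    by_contra! h
    have := polyDim_eq_finrank_of_affineSpan_eq_top (eq_top_mono (affineSpan_le.2 h) hs)
    omega
  have hW : vectorSpan ℝ (insert z₀ F) ≠ ⊤ := fun h => by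
    have := finrank_vectorSpan_insert_le_set ℝ F z₀
    rw [h, finrank_top, ← direction_affineSpan] at this
    exact absurd this (by unfold polyDim at hdim; omega)
  obtain ⟨n, hn0, hn⟩ := exists_dual_ne_zero_forall_eq (mem_insert_of_mem z₀ hy) hW
  wlog hnv : n y ≤ n v generalizing n
  · exact this (-n) (neg_ne_zero.2 hn0) (by simpa using hn)
      (by simp only [neg_apply, neg_le_neg_iff]; linarith)
  have hnF : ∀ x ∈ F, n x = n y := fun x hx => hn x (mem_insert_of_mem _ hx)
  by_cases hz : ∃ z ∈ s, n y < n z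
  · exact exists_toExposed_polyDim_lt_of_pivot hy hv hnF hnv hz
  push Not at hz
  rcases hnv.lt_or_eq with hnv | hnv
  · refine ⟨n, mem_toExposed_convexHull_iff.2 ⟨hy.1, hz⟩, hnv,
      polyDim_lt_of_notMem_affineSpan (fun x hx => ?_) ⟨y, hy⟩ ?_ hz₀⟩
    · exact mem_toExposed_convexHull_iff.2 ⟨hx.1, fun w hw => hnF x hx ▸ hz w hw⟩
    · exact mem_toExposed_convexHull_iff.2
        ⟨subset_convexHull ℝ _ hz₀s, fun w hw => hn z₀ (mem_insert _ _) ▸ hz w hw⟩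
  refine exists_toExposed_polyDim_lt_of_pivot (n := -n) hy hv (by simpa using hnF)
    (by simp [hnv]) ?_
  -- `n` is not constant on `s`, since `s` spans the whole space
  by_contra! h
  have hconst : ∀ x, n x = n y := fun x => apply_eq_of_mem_affineSpan
    (fun w hw => le_antisymm (hz w hw) (by simpa using h w hw)) (hs ▸ AffineSubspace.mem_top ℝ E x)
  exact hn0 (ContinuousLinearMap.ext fun x => by simpa [← hconst 0] using hconst x)

theorem exists_facet_toExposed (hs : affineSpan ℝ (s : Set E) = ⊤) {l : StrongDual ℝ E}
    {y v : E} (hy : y ∈ l.toExposed (convexHull ℝ s)) (hv : l y < l v) :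
    ∃ l' : StrongDual ℝ E, y ∈ l'.toExposed (convexHull ℝ s) ∧ l' y < l' v ∧
      polyDim (l'.toExposed (convexHull ℝ s)) + 1 = Module.finrank ℝ E := by
  induction h : Module.finrank ℝ E - polyDim (l.toExposed (convexHull ℝ s))
    using Nat.strong_induction_on generalizing l with
  | _ k ih =>
  have hl : l ≠ 0 := fun h0 => by simp [h0] at hv
  rcases (polyDim_add_one_le_of_forall_eq hl fun x hx => l.apply_eq_of_mem_toExposed hx hy).lt_or_eq
    with hlt | heq
  · obtain ⟨l', hy', hv', hdim⟩ := exists_toExposed_polyDim_lt hs hy hv hlt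
    exact ih _ (by omega) hy' hv' rfl
  · exact ⟨l, hy, hv, heq⟩

end Facets

section Visibility

variable {E : Type*} [NormedAddCommGroup E] [NormedSpace ℝ E]

theorem exists_last_mem_segment {P : Set E} (hP : IsClosed P) {p v x : E} (hp : p ∈ P)
    (hx : x ∈ segment ℝ p v) (hxP : x ∉ P) :
    ∃ y ∈ P, x ∈ segment ℝ y v ∧ ∀ᶠ ε in 𝓝[>] (0 : ℝ), y + ε • (v - y) ∉ P := by
  set γ := AffineMap.lineMap (k := ℝ) p v
  obtain ⟨b, ⟨hb0, hb1⟩, rfl⟩ : ∃ b ∈ Icc (0 : ℝ) 1, γ b = x := by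
    simpa [segment_eq_image_lineMap] using hx
  have hT : IsCompact {t ∈ Icc 0 b | γ t ∈ P} :=
    isCompact_Icc.inter_right (hP.preimage (AffineMap.lineMap_continuous))
  obtain ⟨t₀, ⟨⟨ht₀, ht₀b⟩, hγt₀⟩, hmax⟩ :=
    hT.exists_isGreatest ⟨0, ⟨le_rfl, hb0⟩, by simpa [γ] using hp⟩
  have ht₀b' : t₀ < b := ht₀b.lt_of_ne (by rintro rfl; exact hxP hγt₀)
  refine ⟨γ t₀, hγt₀, ?_, ?_⟩
  · have : b ∈ segment ℝ t₀ 1 := by rw [segment_eq_Icc (by linarith)]; exact ⟨ht₀b, hb1⟩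
    simpa [γ, image_segment] using mem_image_of_mem γ this
  · filter_upwards [Ioo_mem_nhdsGT (div_pos (sub_pos.2 ht₀b') (sub_pos.2 (ht₀b'.trans_le hb1)))]
      with ε ⟨hε0, hε⟩ hmem
    rw [lt_div_iff₀ (by linarith)] at hε
    have hγ : γ t₀ + ε • (v - γ t₀) = γ (t₀ + ε * (1 - t₀)) := by
      simp only [γ, AffineMap.lineMap_apply_module]; module
    have := hmax ⟨⟨by nlinarith, by linarith⟩, hγ ▸ hmem⟩
    nlinarith

variable [FiniteDimensional ℝ E] {s : Finset E}

theorem exists_supporting_dual_of_eventually_notMem {y u : E} (hy : y ∈ convexHull ℝ (s : Set E))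
    (hu : ∀ᶠ ε in 𝓝[>] (0 : ℝ), y + ε • u ∉ convexHull ℝ (s : Set E)) :
    ∃ l : StrongDual ℝ E, y ∈ l.toExposed (convexHull ℝ s) ∧ 0 < l u := by
  classical
  set S := (y + ·) ⁻¹' convexHull ℝ (s : Set E)
  have h0 : (0 : E) ∈ ConvexCone.hull ℝ S := ConvexCone.subset_hull (by simpa [S] using hy)
  have hu' : u ∉ hull ℝ (s.image (· - y) : Set E) := by
    intro hmem
    have hle : hull ℝ (s.image (· - y) : Set E) ≤ (ConvexCone.hull ℝ S).toPointedCone h0 :=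
      Submodule.span_le.2 fun w hw => by
        obtain ⟨z, hz, rfl⟩ := by simpa using hw
        exact ConvexCone.subset_hull (by simpa [S] using subset_convexHull ℝ _ hz)
    obtain ⟨r, hr, w, hw, rfl⟩ := (ConvexCone.mem_hull_of_convex
      ((convex_convexHull ℝ _).translate_preimage_right y)).1 (hle hmem)
    obtain ⟨ε, hε, hεr⟩ := (hu.and (Ioc_mem_nhdsGT (inv_pos.2 hr))).exists
    refine hε ?_
    simpa [smul_smul] using (convex_convexHull ℝ _).add_smul_mem hy hw
      ⟨mul_nonneg hεr.1.le hr.le, (le_div_iff₀ hr).1 (by simpa using hεr.2)⟩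
  obtain ⟨l, hl, hlu⟩ := exists_dual_nonpos_of_notMem_hull hu'
  exact ⟨l, mem_toExposed_convexHull_iff.2
    ⟨hy, fun z hz => by simpa using hl _ (Finset.mem_image_of_mem _ hz)⟩, hlu⟩

theorem exists_visibleFacet_of_mem_convexHull (hs : affineSpan ℝ (s : Set E) = ⊤) {v x : E}
    (hx : x ∈ convexHull ℝ (convexHull ℝ s ∪ {v})) (hxP : x ∉ convexHull ℝ (s : Set E)) :
    ∃ F, VisibleFacet (convexHull ℝ s) F v ∧ x ∈ convexHull ℝ (F ∪ {v}) := by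
  have hne : (convexHull ℝ (s : Set E)).Nonempty := by
    refine convexHull_nonempty_iff.2 (nonempty_iff_ne_empty.2 fun h => ?_)
    simp [h] at hs
  rw [union_singleton, convexHull_insert hne, convexJoin_singleton_left,
    (convex_convexHull ℝ _).convexHull_eq] at hx
  obtain ⟨p, hp, hxp⟩ := mem_iUnion₂.1 hx
  obtain ⟨y, hyP, hxy, hy⟩ := exists_last_mem_segment (s.finite_toSet.isClosed_convexHull ℝ)
    hp (segment_symm ℝ v p ▸ hxp) hxP
  obtain ⟨l, hly, hlu⟩ := exists_supporting_dual_of_eventually_notMem hyP hy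
  obtain ⟨l', hy', hv', hdim⟩ := exists_facet_toExposed hs hly (by simpa using hlu)
  refine ⟨_, visibleFacet_toExposed hy' hv' ?_, ?_⟩
  · rw [hdim, polyDim_eq_finrank_of_affineSpan_eq_top (by rwa [affineSpan_convexHull])]
  · exact (convex_convexHull ℝ _).segment_subset (subset_convexHull ℝ _ (mem_union_left _ hy'))
      (subset_convexHull ℝ _ (mem_union_right _ (mem_singleton v))) hxy

end Visibility

section Decomposition

variable {E : Type*} [NormedAddCommGroup E] [NormedSpace ℝ E]

theorem VisibleFacet.notMem_of_mem_convexHull {P F : Set E} {v x : E} (hP : Convex ℝ P)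
    (hF : VisibleFacet P F v) (hx : x ∈ convexHull ℝ (F ∪ {v})) (hxF : x ∉ F) : x ∉ P := by
  obtain ⟨⟨hexp, -⟩, φ, hφP, hφF, hφv⟩ := hF
  intro hxP
  rcases F.eq_empty_or_nonempty with rfl | hFne
  · simp only [empty_union, convexHull_singleton, mem_singleton_iff] at hx
    exact (hφP x hxP).not_gt (hx ▸ hφv)
  rw [union_singleton, convexHull_insert hFne, convexJoin_singleton_left,
    (hexp.convex hP).convexHull_eq] at hx
  obtain ⟨q, hq, a, b, ha, hb, hab, rfl⟩ := mem_iUnion₂.1 hx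
  have hφx : φ (a • v + b • q) = a * φ v := by
    simp [Convex.combo_affine_apply hab, hφF q hq]
  rcases ha.eq_or_lt with rfl | ha
  · exact hxF (by simpa [show b = 1 by linarith] using hq)
  · nlinarith [hφP _ hxP]

theorem IsExposed.isClosed_convexHull_union_singleton {s : Finset E} {F : Set E}
    (hF : IsExposed ℝ (convexHull ℝ (s : Set E)) F) (v : E) :
    IsClosed (convexHull ℝ (F ∪ {v})) := by
  have hext : F.extremePoints ℝ ⊆ s :=
    hF.isExtreme.extremePoints_subset_extremePoints.trans extremePoints_convexHull_subset
  have hfin : (F.extremePoints ℝ ∪ {v}).Finite :=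
    (s.finite_toSet.subset hext).union (finite_singleton v)
  -- Krein–Milman: the compact face `F` is the hull of its (finitely many) extreme points
  have hF_eq : convexHull ℝ (F.extremePoints ℝ) = F := by
    rw [← ((hfin.subset subset_union_left).isClosed_convexHull ℝ).closure_eq]
    exact closure_convexHull_extremePoints (hF.isCompact (s.finite_toSet.isCompact_convexHull ℝ))
      (hF.convex (convex_convexHull ℝ _))
  rw [← hF_eq, convexHull_convexHull_union_left]
  exact hfin.isClosed_convexHull ℝ

theorem VisibleFacet.closure_convexHull_union_singleton_diff {s : Finset E} {F : Set E} {v : E}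
    (hF : VisibleFacet (convexHull ℝ (s : Set E)) F v) :
    closure (convexHull ℝ (F ∪ {v}) \ F) = convexHull ℝ (F ∪ {v}) := by
  obtain ⟨⟨hexp, -⟩, φ, -, hφF, hφv⟩ := hF
  refine (closure_minimal sdiff_subset (hexp.isClosed_convexHull_union_singleton v)).antisymm
    fun x hx => ?_
  have hv : v ∈ convexHull ℝ (F ∪ {v}) :=
    subset_convexHull ℝ _ (mem_union_right _ (mem_singleton v))
  have hφx : 0 ≤ φ x := convexHull_min (s := F ∪ {v}) (t := φ ⁻¹' Ici 0)
    (by rintro z (hz | rfl); exacts [(hφF z hz).ge, hφv.le]) ((convex_Ici 0).affine_preimage φ) hx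
  have hseg : openSegment ℝ x v ⊆ convexHull ℝ (F ∪ {v}) \ F := by
    rintro _ ⟨a, b, ha, hb, hab, rfl⟩
    refine ⟨(convex_convexHull ℝ _).openSegment_subset hx hv ⟨a, b, ha, hb, hab, rfl⟩, fun h => ?_⟩
    have := hφF _ h
    rw [Convex.combo_affine_apply hab] at this
    simp only [smul_eq_mul] at this
    nlinarith
  exact closure_mono hseg (segment_subset_closure_openSegment (left_mem_segment ℝ x v))

theorem convexHull_union_singleton_diff_eq_biUnion [FiniteDimensional ℝ E] {s : Finset E}
    (hs : affineSpan ℝ (s : Set E) = ⊤) (v : E) :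
    convexHull ℝ (convexHull ℝ s ∪ {v}) \ convexHull ℝ s =
      ⋃ F ∈ {F | VisibleFacet (convexHull ℝ (s : Set E)) F v}, convexHull ℝ (F ∪ {v}) \ F := by
  ext x
  simp only [Set.mem_sdiff, mem_iUnion₂, mem_ofPred_eq, exists_prop]
  constructor
  · rintro ⟨hx, hxP⟩
    obtain ⟨F, hF, hxF⟩ := exists_visibleFacet_of_mem_convexHull hs hx hxP
    exact ⟨F, hF, hxF, fun h => hxP (hF.1.1.subset h)⟩
  · rintro ⟨F, hF, hxF, hxnF⟩
    exact ⟨convexHull_mono (union_subset_union_left _ hF.1.1.subset) hxF,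
      hF.notMem_of_mem_convexHull (convex_convexHull ℝ _) hxF hxnF⟩

end Decomposition

theorem stmt11_general {d : ℕ} (P : Set (EuclideanSpace ℝ (Fin d))) (v : EuclideanSpace ℝ (Fin d))
    (hP : IsPolytope P) (hfull : polyDim P = d) (hne : P.Nonempty) :
    convexHull ℝ (P ∪ {v}) \ P =
      (⋃ F ∈ {F : Set (EuclideanSpace ℝ (Fin d)) | VisibleFacet P F v},
        convexHull ℝ (F ∪ {v}) \ F) ∧
    (∀ F : Set (EuclideanSpace ℝ (Fin d)), VisibleFacet P F v →
      (∀ F' : Set (EuclideanSpace ℝ (Fin d)), VisibleFacet P F' v → F' = F) →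
      closure (convexHull ℝ (P ∪ {v}) \ P) = convexHull ℝ (F ∪ {v})) := by
  obtain ⟨s, rfl⟩ := hP
  have hs : affineSpan ℝ (s : Set (EuclideanSpace ℝ (Fin d))) = ⊤ := by
    rw [← affineSpan_convexHull]
    exact affineSpan_eq_top_of_polyDim_eq hne (by rw [hfull, finrank_euclideanSpace_fin])
  have hdecomp := convexHull_union_singleton_diff_eq_biUnion hs v
  refine ⟨hdecomp, fun F hF hunique => ?_⟩
  rw [hdecomp, show {F' | VisibleFacet (convexHull ℝ (s : Set _)) F' v} = {F} from
    eq_singleton_iff_unique_mem.2 ⟨hF, hunique⟩, biUnion_singleton]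
  exact hF.closure_convexHull_union_singleton_diff

theorem stmt11 {d : ℕ} (P : Set (EuclideanSpace ℝ (Fin d))) (v : EuclideanSpace ℝ (Fin d))
    (hP : IsPolytope P) (hfull : polyDim P = d) (hne : P.Nonempty) (hv : v ∉ P) :
    convexHull ℝ (P ∪ {v}) \ P =
      (⋃ F ∈ {F : Set (EuclideanSpace ℝ (Fin d)) | VisibleFacet P F v},
        convexHull ℝ (F ∪ {v}) \ F) ∧
    (∀ F : Set (EuclideanSpace ℝ (Fin d)), VisibleFacet P F v →
      (∀ F' : Set (EuclideanSpace ℝ (Fin d)), VisibleFacet P F' v → F' = F) →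
      closure (convexHull ℝ (P ∪ {v}) \ P) = convexHull ℝ (F ∪ {v})) :=
  stmt11_general P v hP hfull hne
end
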